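/- arXiv:1911.01953 — 3 statements merged into one kernel-verified Lean document; each statement's English description precedes it below -/
import Mathlib

section
/- Let S, Σ, Δ be finite types and for each (a,b) ∈ Σ × Δ let Λ_{a,b} be a linear map on Matrix S S ℂ. Work with matrices over the product index type Δ × S. Define the partial trace Tr_Δ : Matrix (Δ×S) (Δ×S) ℂ → Matrix S S ℂ by (Tr_Δ X)(s,s') = ∑_{b∈Δ} X((b,s),(b,s')); the embedding emb_b : Matrix S S ℂ → Matrix (Δ×S) (Δ×S) ℂ by (emb_b M)((b₁,s₁),(b₂,s₂)) = M s₁ s₂ if b₁ = b₂ = b and 0 otherwise; the conditional channel Φ_a(X) = ∑_{b∈Δ} emb_b(Λ_{a,b}(Tr_Δ X)); and the instrument Ω_b(X) = E_b X E_b where E_b = emb_b(1). Then: (i) for all X and all a, b, Ω_b(Φ_a(X)) = emb_b(Λ_{a,b}(Tr_Δ X)); and (ii) for every n, every input word a₁…a_n ∈ Σ^n, every output word b₁…b_n ∈ Δ^n, and every X ∈ Matrix (Δ×S) (Δ×S) ℂ, Tr((Ω_{b_n} ∘ Φ_{a_n} ∘ ⋯ ∘ Ω_{b_1} ∘ Φ_{a_1})(X))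 = Tr((Λ_{a_n,b_n} ∘ ⋯ ∘ Λ_{a_1,b_1})(Tr_Δ X)). -/
open Matrix

/-! Compressing by `E b = embDel b 1` extracts the `b`-th diagonal block, and the partial trace of
a matrix supported on one block is that block; hence each Moore step `Ω b ∘ Φ a` lands in the
`b`-block with the Mealy step `Λ a b` as its content, and the partial trace preserves the trace. -/

/-- Partial trace over the classical register `Del`. -/
noncomputable def ptraceDel {S Del : Type*} [Fintype Del]
    (X : Matrix (Del × S) (Del × S) ℂ) : Matrix S S ℂ :=
  fun s s' => ∑ b : Del, X (b, s) (b, s')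

/-- Embedding of a matrix on `S` into the `b`-block of `Del × S`. -/
def embDel {S Del : Type*} [DecidableEq Del] (b : Del)
    (M : Matrix S S ℂ) : Matrix (Del × S) (Del × S) ℂ :=
  fun q r => if q.1 = b ∧ r.1 = b then M q.2 r.2 else 0

lemma embDel_one_mul_mul_embDel_one {S Del : Type*} [Fintype S] [DecidableEq S] [Fintype Del]
    [DecidableEq Del] (b : Del) (X : Matrix (Del × S) (Del × S) ℂ) :
    embDel b 1 * X * embDel b 1 = embDel b (X.submatrix (Prod.mk b) (Prod.mk b)) := by
  ext ⟨c, s⟩ ⟨d, t⟩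
  by_cases hc : c = b <;> by_cases hd : d = b <;>
    simp [embDel, Matrix.mul_apply, Fintype.sum_prod_type, Matrix.one_apply, hc, hd]

lemma sum_embDel_submatrix {S Del : Type*} [Fintype Del] [DecidableEq Del]
    (Y : Del → Matrix S S ℂ) (b : Del) :
    (∑ b', embDel b' (Y b')).submatrix (Prod.mk b) (Prod.mk b) = Y b := by
  ext s t
  simp [embDel, Matrix.sum_apply]

lemma ptraceDel_embDel {S Del : Type*} [Fintype Del] [DecidableEq Del]
    (b : Del) (M : Matrix S S ℂ) : ptraceDel (embDel b M) = M := by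
  ext s t
  simp [ptraceDel, embDel]

lemma trace_ptraceDel {S Del : Type*} [Fintype S] [Fintype Del]
    (X : Matrix (Del × S) (Del × S) ℂ) : (ptraceDel X).trace = X.trace := by
  simp only [Matrix.trace, Matrix.diag, ptraceDel, Fintype.sum_prod_type]
  exact Finset.sum_comm

lemma embDel_one_mul_sum_embDel_mul_embDel_one {S Del : Type*} [Fintype S] [DecidableEq S]
    [Fintype Del] [DecidableEq Del] (Y : Del → Matrix S S ℂ) (b : Del) :
    embDel b 1 * (∑ b', embDel b' (Y b')) * embDel b 1 = embDel b (Y b) := by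
  rw [embDel_one_mul_mul_embDel_one, sum_embDel_submatrix]

theorem stmt_3_general {S Sig Del : Type*} [Fintype S] [DecidableEq S]
    [Fintype Del] [DecidableEq Del]
    (Λ : Sig → Del → Matrix S S ℂ →ₗ[ℂ] Matrix S S ℂ) :
    (∀ (X : Matrix (Del × S) (Del × S) ℂ) (a : Sig) (b : Del),
        (embDel b (1 : Matrix S S ℂ)) *
            (∑ b' : Del, embDel b' (Λ a b' (ptraceDel X))) *
            (embDel b (1 : Matrix S S ℂ))
          = embDel b (Λ a b (ptraceDel X))) ∧
    (∀ (n : ℕ) (a : Fin n → Sig) (b : Fin n → Del)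
        (X : Matrix (Del × S) (Del × S) ℂ)
        (chain₁ : ℕ → Matrix (Del × S) (Del × S) ℂ)
        (chain₂ : ℕ → Matrix S S ℂ),
        chain₁ 0 = X →
        (∀ k : Fin n, chain₁ ((k : ℕ) + 1) =
          (embDel (b k) (1 : Matrix S S ℂ)) *
            (∑ b' : Del, embDel b' (Λ (a k) b' (ptraceDel (chain₁ k)))) *
            (embDel (b k) (1 : Matrix S S ℂ))) →
        chain₂ 0 = ptraceDel X →
        (∀ k : Fin n, chain₂ ((k : ℕ) + 1) = Λ (a k) (b k) (chain₂ k)) →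
        (chain₁ n).trace = (chain₂ n).trace) := by
  refine ⟨fun X a b => embDel_one_mul_sum_embDel_mul_embDel_one _ b, ?_⟩
  intro n a b X chain₁ chain₂ h₁0 h₁succ h₂0 h₂succ
  have ptraceDel_chain : ∀ k ≤ n, ptraceDel (chain₁ k) = chain₂ k := by
    intro k
    induction k with
    | zero => intro _; rw [h₁0, h₂0]
    | succ k ih =>
      intro hk
      rw [h₁succ ⟨k, hk⟩, h₂succ ⟨k, hk⟩, embDel_one_mul_sum_embDel_mul_embDel_one,
        ptraceDel_embDel, ih (Nat.le_of_succ_le hk)]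
  rw [← trace_ptraceDel, ptraceDel_chain n le_rfl]

/-- Proposition 9 (mealy2moore): the conditional channel
`Φ a X = ∑ b, embDel b (Λ a b (ptraceDel X))` followed by the projective instrument
`Ω b X = E b * X * E b` (with `E b = embDel b 1`) reproduces the Mealy dynamics:
(i) `Ω b (Φ a X) = embDel b (Λ a b (ptraceDel X))`, and (ii) along any input word
`a₁…a_n` and output word `b₁…b_n` the trace of the composed Moore evolution of `X`
equals the trace of the composed Mealy evolution of `ptraceDel X`. -/
theorem stmt_3 {S Sig Del : Type*} [Fintype S] [DecidableEq S]
    [Fintype Sig] [Fintype Del] [DecidableEq Del]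
    (Λ : Sig → Del → Matrix S S ℂ →ₗ[ℂ] Matrix S S ℂ) :
    (∀ (X : Matrix (Del × S) (Del × S) ℂ) (a : Sig) (b : Del),
        (embDel b (1 : Matrix S S ℂ)) *
            (∑ b' : Del, embDel b' (Λ a b' (ptraceDel X))) *
            (embDel b (1 : Matrix S S ℂ))
          = embDel b (Λ a b (ptraceDel X))) ∧
    (∀ (n : ℕ) (a : Fin n → Sig) (b : Fin n → Del)
        (X : Matrix (Del × S) (Del × S) ℂ)
        (chain₁ : ℕ → Matrix (Del × S) (Del × S) ℂ)
        (chain₂ : ℕ → Matrix S S ℂ),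
        chain₁ 0 = X →
        (∀ k : Fin n, chain₁ ((k : ℕ) + 1) =
          (embDel (b k) (1 : Matrix S S ℂ)) *
            (∑ b' : Del, embDel b' (Λ (a k) b' (ptraceDel (chain₁ k)))) *
            (embDel (b k) (1 : Matrix S S ℂ))) →
        chain₂ 0 = ptraceDel X →
        (∀ k : Fin n, chain₂ ((k : ℕ) + 1) = Λ (a k) (b k) (chain₂ k)) →
        (chain₁ n).trace = (chain₂ n).trace) :=
  stmt_3_general Λ
end

section
/- Let 𝒮 be a measurable space, A a nonempty finite type, κ : A → Kernel 𝒮 𝒮 a family of Markov kernels, R : 𝒮 → ℝ a bounded measurable function, and γ ∈ [0,1). For a bounded measurable V : 𝒮 → ℝ define the Bellman operator (𝔗V)(p) = ⨆_{a∈A} ( R(p) + γ · ∫ V(x) d(κ a p)(x) ). Then 𝔗 is a γ-contraction in the supremum distance: for all bounded measurable U, V : 𝒮 → ℝ and every C ≥ 0 such that |U(p) − V(p)| ≤ C for all p ∈ 𝒮, one has |(𝔗U)(p) − (𝔗V)(p)| ≤ γ·C for all p ∈ 𝒮. -/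
open MeasureTheory ProbabilityTheory

section Integral

variable {α E : Type*} [MeasurableSpace α] {μ : Measure α} [IsFiniteMeasure μ]
  [NormedAddCommGroup E] [NormedSpace ℝ E]

/- As `U - V` is bounded, `U` and `V` are integrable or not together; in the latter case both
integrals are `0`. -/
theorem norm_integral_sub_integral_le {U V : α → E} (hU : AEStronglyMeasurable U μ)
    (hV : AEStronglyMeasurable V μ) {C : ℝ} (hC : 0 ≤ C) (hUV : ∀ᵐ x ∂μ, ‖U x - V x‖ ≤ C) :
    ‖∫ x, U x ∂μ - ∫ x, V x ∂μ‖ ≤ C * μ.real Set.univ := by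
  have hUV_int : Integrable (U - V) μ := .of_bound (hU.sub hV) C hUV
  by_cases hU_int : Integrable U μ
  · have hV_int : Integrable V μ := by simpa using hU_int.sub hUV_int
    rw [← integral_sub hU_int hV_int]
    exact norm_integral_le_of_norm_le_const hUV
  · have hV_int : ¬ Integrable V μ := fun hV_int ↦ hU_int (by simpa using hV_int.add hUV_int)
    rw [integral_undef hU_int, integral_undef hV_int, sub_zero, norm_zero]
    positivity

end Integral

section Supremum

variable {ι : Type*} [Nonempty ι] {f g : ι → ℝ} {c : ℝ}

theorem ciSup_le_ciSup_add (hg : BddAbove (Set.range g)) (hfg : ∀ i, f i ≤ g i + c) :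
    ⨆ i, f i ≤ (⨆ i, g i) + c :=
  ciSup_le fun i ↦ (hfg i).trans (add_le_add_left (le_ciSup hg i) c)

theorem abs_ciSup_sub_ciSup_le (hf : BddAbove (Set.range f)) (hg : BddAbove (Set.range g))
    (hfg : ∀ i, |f i - g i| ≤ c) : |(⨆ i, f i) - ⨆ i, g i| ≤ c := by
  rw [abs_sub_le_iff, sub_le_iff_le_add', sub_le_iff_le_add']
  exact ⟨ciSup_le_ciSup_add hg fun i ↦ by linarith [abs_sub_le_iff.1 (hfg i)],
    ciSup_le_ciSup_add hf fun i ↦ by linarith [abs_sub_le_iff.1 (hfg i)]⟩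

end Supremum

theorem stmt_7_general {𝒮 : Type*} [MeasurableSpace 𝒮] {A : Type*} [Fintype A] [Nonempty A]
    (κ : A → Kernel 𝒮 𝒮) (hκ : ∀ a, IsMarkovKernel (κ a))
    (R : 𝒮 → ℝ) (γ : ℝ) (hγ0 : 0 ≤ γ)
    (U V : 𝒮 → ℝ) (hUm : Measurable U) (hVm : Measurable V)
    (C : ℝ) (hC : 0 ≤ C) (hUV : ∀ p, |U p - V p| ≤ C) :
    ∀ p : 𝒮,
      |(⨆ a : A, (R p + γ * ∫ x, U x ∂(κ a p))) -
        (⨆ a : A, (R p + γ * ∫ x, V x ∂(κ a p)))| ≤ γ * C := by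
  intro p
  refine abs_ciSup_sub_ciSup_le (Finite.bddAbove_range _) (Finite.bddAbove_range _) fun a ↦ ?_
  have hintegral : |∫ x, U x ∂(κ a p) - ∫ x, V x ∂(κ a p)| ≤ C := by
    have := (hκ a).isProbabilityMeasure p
    simpa using norm_integral_sub_integral_le (μ := κ a p) hUm.aestronglyMeasurable
      hVm.aestronglyMeasurable hC (.of_forall hUV)
  rw [add_sub_add_left_eq_sub, ← mul_sub, abs_mul, abs_of_nonneg hγ0]
  exact mul_le_mul_of_nonneg_left hintegral hγ0

/-- Contraction part of Theorem 19 (banach, after Blackwell): the Bellman operator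
`𝔗V p = ⨆ a, (R p + γ ∫ V d(κ a p))` of a discounted MDP with finite action set,
Markov kernels, bounded measurable reward and discount `γ ∈ [0,1)` is a
`γ`-contraction in the supremum distance. -/
theorem stmt_7 {𝒮 : Type*} [MeasurableSpace 𝒮] {A : Type*} [Fintype A] [Nonempty A]
    (κ : A → Kernel 𝒮 𝒮) (hκ : ∀ a, IsMarkovKernel (κ a))
    (R : 𝒮 → ℝ) (hRm : Measurable R) (CR : ℝ) (hRb : ∀ p, |R p| ≤ CR)
    (γ : ℝ) (hγ0 : 0 ≤ γ) (hγ1 : γ < 1)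
    (U V : 𝒮 → ℝ) (hUm : Measurable U) (hVm : Measurable V)
    (CU CV : ℝ) (hUb : ∀ p, |U p| ≤ CU) (hVb : ∀ p, |V p| ≤ CV)
    (C : ℝ) (hC : 0 ≤ C) (hUV : ∀ p, |U p - V p| ≤ C) :
    ∀ p : 𝒮,
      |(⨆ a : A, (R p + γ * ∫ x, U x ∂(κ a p))) -
        (⨆ a : A, (R p + γ * ∫ x, V x ∂(κ a p)))| ≤ γ * C :=
  stmt_7_general κ hκ R γ hγ0 U V hUm hVm C hC hUV
end

section
/- Let 𝒮 be a measurable space, A a nonempty finite type, κ : A → Kernel 𝒮 𝒮 a family of Markov kernels, R : 𝒮 → ℝ bounded measurable, and γ ∈ [0,1). Define the Bellman operator (𝔗V)(p) = ⨆_{a∈A} ( R(p) + γ · ∫ V(x) d(κ a p)(x) ) on bounded measurable functions. If U and V are bounded measurable functions on 𝒮 with 𝔗U = U and 𝔗V = V, then U = V. -/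
/-!
The Bellman operator is a `γ`-contraction for the sup distance: a maximum over finitely many
actions moves by at most the largest change of its arguments, and averaging against a Markov
kernel does not increase a uniform bound. Two fixed points `U`, `V` therefore satisfy
`|U - V| ≤ γ ^ n (CU + CV)` for every `n`, which forces `U = V`.
-/

open MeasureTheory ProbabilityTheory Filter

lemma ciSup_le_ciSup_add_s9 {ι : Type*} [Nonempty ι] {f g : ι → ℝ} {B : ℝ}
    (hg : BddAbove (Set.range g)) (h : ∀ a, f a ≤ g a + B) : ⨆ a, f a ≤ (⨆ a, g a) + B :=
  ciSup_le fun a => (h a).trans (add_le_add (le_ciSup hg a) le_rfl)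

lemma abs_ciSup_sub_ciSup_le_s9 {ι : Type*} [Finite ι] [Nonempty ι] {f g : ι → ℝ} {B : ℝ}
    (h : ∀ a, |f a - g a| ≤ B) : |(⨆ a, f a) - ⨆ a, g a| ≤ B := by
  rw [abs_sub_le_iff, sub_le_iff_le_add', sub_le_iff_le_add']
  constructor
  · exact ciSup_le_ciSup_add_s9 (Set.finite_range g).bddAbove fun a =>
      by linarith [(abs_sub_le_iff.mp (h a)).1]
  · exact ciSup_le_ciSup_add_s9 (Set.finite_range f).bddAbove fun a =>
      by linarith [(abs_sub_le_iff.mp (h a)).2]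

lemma abs_integral_sub_integral_le {α : Type*} [MeasurableSpace α] {μ : Measure α}
    [IsProbabilityMeasure μ] {U V : α → ℝ} {C : ℝ} (hU : Integrable U μ) (hV : Integrable V μ)
    (h : ∀ᵐ x ∂μ, |U x - V x| ≤ C) : |(∫ x, U x ∂μ) - ∫ x, V x ∂μ| ≤ C := by
  rw [← integral_sub hU hV, ← Real.norm_eq_abs]
  simpa using norm_integral_le_of_norm_le_const (μ := μ) (f := fun x => U x - V x) h

lemma integrable_of_abs_le {α : Type*} [MeasurableSpace α] {μ : Measure α} [IsFiniteMeasure μ]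
    {U : α → ℝ} {C : ℝ} (hU : Measurable U) (hUb : ∀ x, |U x| ≤ C) : Integrable U μ :=
  .of_bound hU.aestronglyMeasurable C (.of_forall hUb)

section Bellman

variable {𝒮 A : Type*} [MeasurableSpace 𝒮]

noncomputable def bellmanOperator (κ : A → Kernel 𝒮 𝒮) (R : 𝒮 → ℝ) (γ : ℝ) (V : 𝒮 → ℝ)
    (p : 𝒮) : ℝ :=
  ⨆ a, R p + γ * ∫ x, V x ∂(κ a p)

lemma abs_bellmanOperator_sub_le [Finite A] [Nonempty A] {κ : A → Kernel 𝒮 𝒮}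
    (hκ : ∀ a, IsMarkovKernel (κ a)) (R : 𝒮 → ℝ) {γ : ℝ} (hγ : 0 ≤ γ) {U V : 𝒮 → ℝ}
    (hU : ∀ a p, Integrable U (κ a p)) (hV : ∀ a p, Integrable V (κ a p)) {C : ℝ}
    (h : ∀ x, |U x - V x| ≤ C) (p : 𝒮) :
    |bellmanOperator κ R γ U p - bellmanOperator κ R γ V p| ≤ γ * C := by
  refine abs_ciSup_sub_ciSup_le_s9 fun a => ?_
  have hint := abs_integral_sub_integral_le (hU a p) (hV a p) (.of_forall h)
  calc |(R p + γ * ∫ x, U x ∂(κ a p)) - (R p + γ * ∫ x, V x ∂(κ a p))|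
      = γ * |(∫ x, U x ∂(κ a p)) - ∫ x, V x ∂(κ a p)| := by
        rw [add_sub_add_left_eq_sub, ← mul_sub, abs_mul, abs_of_nonneg hγ]
    _ ≤ γ * C := mul_le_mul_of_nonneg_left hint hγ

end Bellman

lemma eq_of_uniform_bound_contracts {X : Type*} {U V : X → ℝ} {γ C₀ : ℝ} (hγ0 : 0 ≤ γ)
    (hγ1 : γ < 1) (hbound : ∀ x, |U x - V x| ≤ C₀)
    (hstep : ∀ C, (∀ x, |U x - V x| ≤ C) → ∀ x, |U x - V x| ≤ γ * C) : U = V := by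
  have hpow : ∀ n : ℕ, ∀ x, |U x - V x| ≤ γ ^ n * C₀ := by
    intro n
    induction n with
    | zero => simpa using hbound
    | succ n ih => simpa [pow_succ', mul_assoc] using hstep _ ih
  have hlim : Tendsto (fun n : ℕ => γ ^ n * C₀) atTop (nhds 0) := by
    simpa using (tendsto_pow_atTop_nhds_zero_of_lt_one hγ0 hγ1).mul_const C₀
  funext x
  have hx : |U x - V x| ≤ 0 := ge_of_tendsto hlim (.of_forall fun n => hpow n x)
  exact sub_eq_zero.mp (abs_nonpos_iff.mp hx)

theorem stmt_9_general {𝒮 : Type*} [MeasurableSpace 𝒮] {A : Type*} [Fintype A] [Nonempty A]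
    (κ : A → Kernel 𝒮 𝒮) (hκ : ∀ a, IsMarkovKernel (κ a))
    (R : 𝒮 → ℝ)
    (γ : ℝ) (hγ0 : 0 ≤ γ) (hγ1 : γ < 1)
    (U V : 𝒮 → ℝ) (hUm : Measurable U) (hVm : Measurable V)
    (CU CV : ℝ) (hUb : ∀ p, |U p| ≤ CU) (hVb : ∀ p, |V p| ≤ CV)
    (hUfix : ∀ p : 𝒮, (⨆ a : A, (R p + γ * ∫ x, U x ∂(κ a p))) = U p)
    (hVfix : ∀ p : 𝒮, (⨆ a : A, (R p + γ * ∫ x, V x ∂(κ a p))) = V p) :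
    U = V := by
  refine eq_of_uniform_bound_contracts hγ0 hγ1
    (fun p => (abs_sub _ _).trans (add_le_add (hUb p) (hVb p))) fun C hC p => ?_
  rw [← hUfix p, ← hVfix p]
  exact abs_bellmanOperator_sub_le hκ R hγ0 (fun _ _ => integrable_of_abs_le hUm hUb)
    (fun _ _ => integrable_of_abs_le hVm hVb) hC p

/-- Uniqueness part of Theorem 19 (banach, after Blackwell): the Bellman operator
of a discounted MDP with finite action set, Markov kernels, bounded measurable
reward and discount `γ ∈ [0,1)` has at most one fixed point among bounded
measurable functions. -/
theorem stmt_9 {𝒮 : Type*} [MeasurableSpace 𝒮] {A : Type*} [Fintype A] [Nonempty A]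
    (κ : A → Kernel 𝒮 𝒮) (hκ : ∀ a, IsMarkovKernel (κ a))
    (R : 𝒮 → ℝ) (hRm : Measurable R) (CR : ℝ) (hRb : ∀ p, |R p| ≤ CR)
    (γ : ℝ) (hγ0 : 0 ≤ γ) (hγ1 : γ < 1)
    (U V : 𝒮 → ℝ) (hUm : Measurable U) (hVm : Measurable V)
    (CU CV : ℝ) (hUb : ∀ p, |U p| ≤ CU) (hVb : ∀ p, |V p| ≤ CV)
    (hUfix : ∀ p : 𝒮, (⨆ a : A, (R p + γ * ∫ x, U x ∂(κ a p))) = U p)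
    (hVfix : ∀ p : 𝒮, (⨆ a : A, (R p + γ * ∫ x, V x ∂(κ a p))) = V p) :
    U = V :=
  stmt_9_general κ hκ R γ hγ0 hγ1 U V hUm hVm CU CV hUb hVb hUfix hVfix
end
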